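/- arXiv:2010.02637 — 4 statements merged into one kernel-verified Lean document; each statement's English description precedes it below -/
import Mathlib

section
/- Let X be a random variable with values in ℝ^d on a probability space, let ξ : ℝ^d → ℝ^m be measurable, and let E : ℝ^d → ℝ^k (k ≥ m) be a measurable encoder that is disentangled with respect to ξ, i.e. for each i = 1,…,m there is an injective function g_i : ℝ → ℝ with E_i(x) = g_i(ξ_i(x)) for all x, and moreover there are measurable functions r_i : ℝ → ℝ with r_i ∘ g_i = id. If there exist indices i ≠ j (with i, j ≤ m) such that the random variables ξ_i(X) and ξ_j(X) are not independent, then the law of E(X) on ℝ^k is not equal to any product probability measure ⊗_{i=1}^k p_i (with each p_i a probability measure on ℝ). -/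
/-!
Distinct coordinates are independent under a product measure. Since `ξ_i(X) = r_i(E(X)_i)`,
the factors `ξ_i(X)` and `ξ_j(X)` are measurable functions of two distinct coordinates of `E(X)`,
so if the law of `E(X)` were a product they would be independent.
-/

open MeasureTheory ProbabilityTheory

namespace ProbabilityTheory

variable {Ω α β γ : Type*} [MeasurableSpace Ω] [MeasurableSpace α] [MeasurableSpace β]
  [MeasurableSpace γ] {μ : Measure Ω}

theorem IndepFun.comp_of_map {Y : Ω → α} {f : α → β} {g : α → γ} (hY : AEMeasurable Y μ)
    (hf : Measurable f) (hg : Measurable g) (h : IndepFun f g (μ.map Y)) :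
    IndepFun (f ∘ Y) (g ∘ Y) μ := by
  rw [indepFun_iff_measure_inter_preimage_eq_mul] at h ⊢
  intro s t hs ht
  have hfs := hf hs
  have hgt := hg ht
  simpa only [Measure.map_apply_of_aemeasurable hY, hfs, hgt, hfs.inter hgt,
    Set.preimage_inter, Set.preimage_comp] using h s t hs ht

theorem indepFun_eval_pi {ι : Type*} [Fintype ι] {X : ι → Type*} [∀ i, MeasurableSpace (X i)]
    (p : ∀ i, Measure (X i)) [∀ i, IsProbabilityMeasure (p i)] {i j : ι} (hij : i ≠ j) :
    IndepFun (fun x : ∀ i, X i => x i) (fun x => x j) (Measure.pi p) :=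
  (iIndepFun_pi (X := fun _ => id) fun _ => aemeasurable_id).indepFun hij

end ProbabilityTheory

theorem disentangled_law_ne_product_general
    {Ω : Type*} [MeasurableSpace Ω] (μ : Measure Ω) [IsProbabilityMeasure μ]
    {d m k : ℕ} (hmk : m ≤ k)
    (X : Ω → (Fin d → ℝ)) (hX : Measurable X)
    (ξ : (Fin d → ℝ) → (Fin m → ℝ))
    (E : (Fin d → ℝ) → (Fin k → ℝ)) (hE : Measurable E)
    (g r : Fin m → ℝ → ℝ)
    (hr : ∀ i, Measurable (r i))
    (hrg : ∀ i t, r i (g i t) = t)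
    (hEg : ∀ i x, E x (Fin.castLE hmk i) = g i (ξ x i))
    (hdep : ∃ i j : Fin m, i ≠ j ∧
      ¬ IndepFun (fun ω => ξ (X ω) i) (fun ω => ξ (X ω) j) μ)
    (p : Fin k → Measure ℝ) (hp : ∀ i, IsProbabilityMeasure (p i)) :
    Measure.map (fun ω => E (X ω)) μ ≠ Measure.pi p := by
  intro hlaw
  obtain ⟨i, j, hij, hdep⟩ := hdep
  have hξ_eq (l : Fin m) :
      (fun ω => ξ (X ω) l) = (r l ∘ fun y => y (Fin.castLE hmk l)) ∘ fun ω => E (X ω) := by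
    ext ω
    simp [hEg, hrg]
  have hcoord : IndepFun (fun y : Fin k → ℝ => y (Fin.castLE hmk i))
      (fun y => y (Fin.castLE hmk j)) (Measure.pi p) :=
    indepFun_eval_pi p ((Fin.castLE_injective hmk).ne hij)
  rw [← hlaw] at hcoord
  refine hdep ?_
  rw [hξ_eq i, hξ_eq j]
  exact ((hcoord.comp (hr i) (hr j)).comp_of_map (hE.comp hX).aemeasurable
    ((hr i).comp (measurable_pi_apply _)) ((hr j).comp (measurable_pi_apply _)))

/-- If a measurable encoder `E : ℝ^d → ℝ^k` is disentangled with respect to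
measurable factors `ξ : ℝ^d → ℝ^m` (i.e. `E_i = g_i ∘ ξ_i` with `g_i` injective, admitting
measurable left inverses `r_i`), and two of the factors `ξ_i(X), ξ_j(X)` are not independent,
then the law of `E(X)` is not a product probability measure. -/
theorem disentangled_law_ne_product
    {Ω : Type*} [MeasurableSpace Ω] (μ : Measure Ω) [IsProbabilityMeasure μ]
    {d m k : ℕ} (hmk : m ≤ k)
    (X : Ω → (Fin d → ℝ)) (hX : Measurable X)
    (ξ : (Fin d → ℝ) → (Fin m → ℝ)) (hξ : Measurable ξ)
    (E : (Fin d → ℝ) → (Fin k → ℝ)) (hE : Measurable E)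
    (g r : Fin m → ℝ → ℝ)
    (hg : ∀ i, Function.Injective (g i))
    (hr : ∀ i, Measurable (r i))
    (hrg : ∀ i t, r i (g i t) = t)
    (hEg : ∀ i x, E x (Fin.castLE hmk i) = g i (ξ x i))
    (hdep : ∃ i j : Fin m, i ≠ j ∧
      ¬ IndepFun (fun ω => ξ (X ω) i) (fun ω => ξ (X ω) j) μ)
    (p : Fin k → Measure ℝ) (hp : ∀ i, IsProbabilityMeasure (p i)) :
    Measure.map (fun ω => E (X ω)) μ ≠ Measure.pi p :=
  disentangled_law_ne_product_general μ hmk X hX ξ E hE g r hr hrg hEg hdep p hp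
end

section
/- Let X be a random variable with values in ℝ^d, let ξ : ℝ^d → ℝ^m be measurable, and let E : ℝ^d → ℝ^k (k ≥ m) be a measurable encoder disentangled w.r.t. ξ, i.e. E_i(x) = g_i(ξ_i(x)) for injective g_i admitting measurable left inverses r_i with r_i ∘ g_i = id (i = 1,…,m). Suppose there exist i ≠ j (i, j ≤ m) such that ξ_i(X) and ξ_j(X) are not independent. Then for every product probability measure p_z = ⊗_{i=1}^k p_i on ℝ^k and every Markov kernel G from ℝ^k to ℝ^d, the Kullback–Leibler divergence between the law of (X, E(X)) on ℝ^d × ℝ^k and the joint measure p_G on ℝ^d × ℝ^k determined by z ∼ p_z, x ∼ G(·|z) is strictly positive: KL(law(X, E(X)), p_G) > 0. -/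
open MeasureTheory ProbabilityTheory
open scoped Classical

/-- Kullback–Leibler divergence `KL(μ, ν) = ∫ log(dμ/dν) dμ`, equal to `+∞` when `μ` is not
absolutely continuous with respect to `ν` (or when the log-likelihood ratio is not integrable). -/
noncomputable def klDiv {α : Type*} [MeasurableSpace α] (μ ν : Measure α) : ENNReal :=
  if μ ≪ ν ∧ Integrable (llr μ ν) μ then ENNReal.ofReal (∫ x, llr μ ν x ∂μ) else ⊤

/-!
If the KL divergence vanished, the two joint laws would coincide, and so would their marginals
on the code space: `E(X)` would be distributed as the product measure `⊗ pᵢ`, whose coordinates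
are independent. Disentanglement recovers `ξᵢ(X) = rᵢ(E(X)ᵢ)` measurably from the code, so any
two factors would be independent as well.
-/

lemma klDiv_eq_informationTheory_klDiv {α : Type*} [MeasurableSpace α] (μ ν : Measure α)
    [IsProbabilityMeasure μ] [IsProbabilityMeasure ν] :
    klDiv μ ν = InformationTheory.klDiv μ ν := by
  by_cases h : μ ≪ ν ∧ Integrable (llr μ ν) μ
  · rw [klDiv, if_pos h, InformationTheory.klDiv_of_ac_of_integrable h.1 h.2]
    simp
  · rw [klDiv, if_neg h, eq_comm, InformationTheory.klDiv_eq_top_iff]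
    exact fun hac hint => h ⟨hac, hint⟩

lemma klDiv_pos_of_ne {α : Type*} [MeasurableSpace α] {μ ν : Measure α}
    [IsProbabilityMeasure μ] [IsProbabilityMeasure ν] (h : μ ≠ ν) : 0 < klDiv μ ν := by
  rw [klDiv_eq_informationTheory_klDiv, pos_iff_ne_zero, Ne, InformationTheory.klDiv_eq_zero_iff]
  exact h

lemma indepFun_eval_of_map_eq_pi {Ω ι : Type*} [MeasurableSpace Ω] [Fintype ι]
    {β : ι → Type*} [∀ i, MeasurableSpace (β i)] {μ : Measure Ω} [IsProbabilityMeasure μ]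
    {p : ∀ i, Measure (β i)} [∀ i, IsProbabilityMeasure (p i)] {Y : Ω → ∀ i, β i}
    (hY : Measurable Y) (hlaw : μ.map Y = Measure.pi p) {i j : ι} (hij : i ≠ j) :
    IndepFun (fun ω => Y ω i) (fun ω => Y ω j) μ := by
  have hcoord : IndepFun (fun y : ∀ i, β i => y i) (fun y => y j) (Measure.pi p) :=
    (iIndepFun_pi (X := fun _ => id) fun _ => aemeasurable_id).indepFun hij
  have hident : IdentDistrib id Y (Measure.pi p) μ :=
    ⟨aemeasurable_id, hY.aemeasurable, by rw [Measure.map_id, hlaw]⟩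
  exact indepFun_of_identDistrib_pair hcoord
    (hident.comp ((measurable_pi_apply i).prodMk (measurable_pi_apply j)))

theorem klDiv_pos_of_disentangled_dependent_general
    {Ω : Type*} [MeasurableSpace Ω] (μ : Measure Ω) [IsProbabilityMeasure μ]
    {d m k : ℕ} (hmk : m ≤ k)
    (X : Ω → (Fin d → ℝ)) (hX : Measurable X)
    (ξ : (Fin d → ℝ) → (Fin m → ℝ))
    (E : (Fin d → ℝ) → (Fin k → ℝ)) (hE : Measurable E)
    (g r : Fin m → ℝ → ℝ)
    (hr : ∀ i, Measurable (r i))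
    (hrg : ∀ i t, r i (g i t) = t)
    (hEg : ∀ i x, E x (Fin.castLE hmk i) = g i (ξ x i))
    (hdep : ∃ i j : Fin m, i ≠ j ∧
      ¬ IndepFun (fun ω => ξ (X ω) i) (fun ω => ξ (X ω) j) μ)
    (p : Fin k → Measure ℝ) (hp : ∀ i, IsProbabilityMeasure (p i))
    (G : Kernel (Fin k → ℝ) (Fin d → ℝ)) [IsMarkovKernel G] :
    0 < klDiv (Measure.map (fun ω => (X ω, E (X ω))) μ)
        (Measure.map Prod.swap (Measure.compProd (Measure.pi p) G)) := by
  have hEX : Measurable fun ω => E (X ω) := hE.comp hX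
  have := Measure.isProbabilityMeasure_map (μ := μ) (hX.prodMk hEX).aemeasurable
  have := Measure.isProbabilityMeasure_map
    (μ := Measure.compProd (Measure.pi p) G) measurable_swap.aemeasurable
  obtain ⟨i, j, hij, hdep⟩ := hdep
  refine klDiv_pos_of_ne fun hjoint => hdep ?_
  have hcode : μ.map (fun ω => E (X ω)) = Measure.pi p := by
    simpa [Measure.snd_map_prodMk hX] using congrArg Measure.snd hjoint
  have hfactor : ∀ l, (fun ω => ξ (X ω) l) = r l ∘ fun ω => E (X ω) (Fin.castLE hmk l) :=
    fun l => funext fun ω => by simp [hEg, hrg]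
  rw [hfactor i, hfactor j]
  exact (indepFun_eval_of_map_eq_pi hEX hcode ((Fin.castLE_injective hmk).ne hij)).comp
    (hr i) (hr j)

/-- If a measurable encoder `E` is disentangled w.r.t. factors `ξ` and two of the
factors `ξ_i(X), ξ_j(X)` are not independent, then for every product prior `p_z = ⊗ p_i` on `ℝ^k`
and every Markov kernel `G` from `ℝ^k` to `ℝ^d`, the KL divergence between the law of `(X, E(X))`
and the joint measure of `(x, z)` with `z ∼ p_z`, `x ∼ G(·|z)` is strictly positive. -/
theorem klDiv_pos_of_disentangled_dependent
    {Ω : Type*} [MeasurableSpace Ω] (μ : Measure Ω) [IsProbabilityMeasure μ]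
    {d m k : ℕ} (hmk : m ≤ k)
    (X : Ω → (Fin d → ℝ)) (hX : Measurable X)
    (ξ : (Fin d → ℝ) → (Fin m → ℝ)) (hξ : Measurable ξ)
    (E : (Fin d → ℝ) → (Fin k → ℝ)) (hE : Measurable E)
    (g r : Fin m → ℝ → ℝ)
    (hg : ∀ i, Function.Injective (g i))
    (hr : ∀ i, Measurable (r i))
    (hrg : ∀ i t, r i (g i t) = t)
    (hEg : ∀ i x, E x (Fin.castLE hmk i) = g i (ξ x i))
    (hdep : ∃ i j : Fin m, i ≠ j ∧
      ¬ IndepFun (fun ω => ξ (X ω) i) (fun ω => ξ (X ω) j) μ)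
    (p : Fin k → Measure ℝ) (hp : ∀ i, IsProbabilityMeasure (p i))
    (G : Kernel (Fin k → ℝ) (Fin d → ℝ)) [IsMarkovKernel G] :
    0 < klDiv (Measure.map (fun ω => (X ω, E (X ω))) μ)
        (Measure.map Prod.swap (Measure.compProd (Measure.pi p) G)) :=
  klDiv_pos_of_disentangled_dependent_general μ hmk X hX ξ E hE g r hr hrg hEg hdep p hp G
end

section
/- Let X be a random variable with values in ℝ^d and Y a random vector with values in [0,1]^m on the same probability space, and λ > 0. For each i = 1,…,m let ξ_i : ℝ^d → (0,1) be measurable with ξ_i(X) = 𝔼[Y_i | X] almost surely. Define E* : ℝ^d → ℝ^k (k ≥ m) by E*_i(x) = logit(ξ_i(x)) for i ≤ m and E*_i(x) = 0 for i > m, and let ν* be the law of (X, E*(X)) on ℝ^d × ℝ^k. Then for every measurable E : ℝ^d → ℝ^k with each CE(E_i(X), Y_i) integrable and every probability measure ν on ℝ^d × ℝ^k: KL(law(X, E(X)), ν) + λ·Σ_{i=1}^m 𝔼[CE(E_i(X), Y_i)] ≥ KL(law(X, E*(X)), ν*) + λ·Σ_{i=1}^m 𝔼[CE(E*_i(X),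 Y_i)], and the right-hand side equals λ·Σ_{i=1}^m 𝔼[CE(logit(ξ_i(X)), Y_i)]. In particular (E*, ν*) is a global minimizer of the objective, and E* is disentangled w.r.t. ξ with g_i = σ^{−1}. -/
open MeasureTheory ProbabilityTheory
open scoped Classical

/-- The sigmoid function `σ(t) = 1/(1+exp(−t))`. -/
noncomputable def sigmoid (t : ℝ) : ℝ := 1 / (1 + Real.exp (-t))

/-- The cross-entropy loss `CE(t,y) = −(y·log σ(t) + (1−y)·log(1−σ(t)))`. -/
noncomputable def CE (t y : ℝ) : ℝ :=
  -(y * Real.log (sigmoid t) + (1 - y) * Real.log (1 - sigmoid t))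

/-- The logit function `logit(p) = log(p/(1−p))`, the inverse `σ⁻¹` of the sigmoid on `(0,1)`. -/
noncomputable def logit (p : ℝ) : ℝ := Real.log (p / (1 - p))

/-!
Writing `CE t y = y·(−log σ t) + (1 − y)·(−log σ(−t))`, the cross-entropy is affine in `y` with
coefficients that depend on `X` only, so conditioning on `X` replaces `Yᵢ` by `ξᵢ(X)` in
`𝔼[CE(Eᵢ(X), Yᵢ)]`. Pointwise, `t ↦ CE(t, p)` is minimised at `t = logit p` (Gibbs' inequality), so
`E*` minimises every cross-entropy term, while the KL term of `(E*, ν*)` vanishes.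
-/

lemma sigmoid_pos (t : ℝ) : 0 < sigmoid t := by
  unfold sigmoid; positivity

lemma one_sub_sigmoid (t : ℝ) : 1 - sigmoid t = sigmoid (-t) := by
  unfold sigmoid
  rw [neg_neg, Real.exp_neg]
  field_simp
  ring

lemma sigmoid_lt_one (t : ℝ) : sigmoid t < 1 := by
  linarith [one_sub_sigmoid t, sigmoid_pos (-t)]

lemma neg_log_sigmoid_nonneg (t : ℝ) : 0 ≤ -Real.log (sigmoid t) :=
  neg_nonneg.2 (Real.log_nonpos (sigmoid_pos t).le (sigmoid_lt_one t).le)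

lemma measurable_sigmoid : Measurable sigmoid := by
  unfold sigmoid; fun_prop

lemma measurable_logit : Measurable logit := by
  unfold logit; fun_prop

lemma sigmoid_logit {p : ℝ} (hp : p ∈ Set.Ioo (0 : ℝ) 1) : sigmoid (logit p) = p := by
  obtain ⟨hp0, hp1⟩ := hp
  have hq : 0 < 1 - p := by linarith
  rw [sigmoid, logit, Real.exp_neg, Real.exp_log (div_pos hp0 hq)]
  field_simp
  ring

lemma logit_injOn : Set.InjOn logit (Set.Ioo (0 : ℝ) 1) :=
  Set.LeftInvOn.injOn fun _ hp => sigmoid_logit hp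

lemma CE_eq (t y : ℝ) :
    CE t y = -Real.log (sigmoid t) * y + -Real.log (sigmoid (-t)) * (1 - y) := by
  rw [CE, one_sub_sigmoid]; ring

lemma CE_nonneg (t : ℝ) {y : ℝ} (hy : y ∈ Set.Icc (0 : ℝ) 1) : 0 ≤ CE t y := by
  rw [CE_eq]
  exact add_nonneg (mul_nonneg (neg_log_sigmoid_nonneg t) hy.1)
    (mul_nonneg (neg_log_sigmoid_nonneg (-t)) (sub_nonneg.2 hy.2))

lemma mul_sub_log_le {p q : ℝ} (hp : 0 < p) (hq : 0 < q) :
    p * (Real.log q - Real.log p) ≤ q - p := by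
  have h := Real.log_le_sub_one_of_pos (div_pos hq hp)
  rw [Real.log_div hq.ne' hp.ne'] at h
  calc p * (Real.log q - Real.log p) ≤ p * (q / p - 1) := by gcongr
    _ = q - p := by field_simp

lemma CE_logit_le {p : ℝ} (hp : p ∈ Set.Ioo (0 : ℝ) 1) (t : ℝ) : CE (logit p) p ≤ CE t p := by
  have hσ := mul_sub_log_le hp.1 (sigmoid_pos t)
  have hσ' := mul_sub_log_le (sub_pos.2 hp.2) (sigmoid_pos (-t))
  rw [← one_sub_sigmoid] at hσ'
  rw [CE, CE, sigmoid_logit hp]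
  linarith

lemma klDiv_self {α : Type*} [MeasurableSpace α] (ν : Measure α) [SigmaFinite ν] :
    klDiv ν ν = 0 := by
  have hllr := llr_self ν
  rw [klDiv, if_pos ⟨Measure.AbsolutelyContinuous.rfl, (integrable_zero _ _ _).congr hllr.symm⟩,
    integral_congr_ae hllr]
  simp

section CondExp

variable {Ω : Type*} {m mΩ : MeasurableSpace Ω} {μ : Measure Ω} {g f Z : Ω → ℝ}

lemma mul_ae_eq_condExp_mul (hg : StronglyMeasurable[m] g) (hgf : Integrable (g * f) μ)
    (hf : Integrable f μ) (hZ : Z =ᵐ[μ] μ[f|m]) : g * Z =ᵐ[μ] μ[g * f|m] := by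
  filter_upwards [condExp_mul_of_stronglyMeasurable_left hg hgf hf, hZ] with ω hω hZω
  simp only [Pi.mul_apply, hω, hZω]

lemma integrable_mul_of_ae_eq_condExp (hg : StronglyMeasurable[m] g)
    (hgf : Integrable (g * f) μ) (hf : Integrable f μ) (hZ : Z =ᵐ[μ] μ[f|m]) :
    Integrable (g * Z) μ :=
  integrable_condExp.congr (mul_ae_eq_condExp_mul hg hgf hf hZ).symm

lemma integral_mul_of_ae_eq_condExp [IsFiniteMeasure μ] (hm : m ≤ mΩ)
    (hg : StronglyMeasurable[m] g) (hgf : Integrable (g * f) μ) (hf : Integrable f μ)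
    (hZ : Z =ᵐ[μ] μ[f|m]) :
    ∫ ω, (g * f) ω ∂μ = ∫ ω, (g * Z) ω ∂μ := by
  rw [← integral_condExp hm]
  exact integral_congr_ae (mul_ae_eq_condExp_mul hg hgf hf hZ).symm

end CondExp

section CrossEntropy

variable {Ω β : Type*} [MeasurableSpace Ω] [MeasurableSpace β] {μ : Measure Ω}
  [IsFiniteMeasure μ] {X : Ω → β} {Y : Ω → ℝ} {p f : β → ℝ}

lemma integrable_of_forall_mem_Icc_zero_one (hY : Measurable Y)
    (hY01 : ∀ ω, Y ω ∈ Set.Icc (0 : ℝ) 1) : Integrable Y μ :=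
  Integrable.of_bound hY.aestronglyMeasurable 1 <| .of_forall fun ω => by
    rw [Real.norm_eq_abs, abs_le]
    exact ⟨by linarith [(hY01 ω).1], (hY01 ω).2⟩

lemma condExp_one_sub_comap (hX : Measurable X) (hY : Integrable Y μ)
    (hp : (p ∘ X) =ᵐ[μ] μ[Y|MeasurableSpace.comap X inferInstance]) :
    (fun ω => 1 - p (X ω)) =ᵐ[μ] μ[fun ω => 1 - Y ω|MeasurableSpace.comap X inferInstance] := by
  have hsub := condExp_sub (integrable_const (1 : ℝ)) hY (MeasurableSpace.comap X inferInstance)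
  rw [condExp_const hX.comap_le] at hsub
  filter_upwards [hsub, hp] with ω hω hpω
  simp only [Pi.sub_apply, Function.comp_apply] at hω hpω
  rw [hpω]
  exact hω.symm

lemma integral_CE_eq_of_ae_eq_condExp (hX : Measurable X) (hY : Measurable Y)
    (hY01 : ∀ ω, Y ω ∈ Set.Icc (0 : ℝ) 1)
    (hp : (p ∘ X) =ᵐ[μ] μ[Y|MeasurableSpace.comap X inferInstance]) (hf : Measurable f)
    (hCE : Integrable (fun ω => CE (f (X ω)) (Y ω)) μ) :
    Integrable (fun ω => CE (f (X ω)) (p (X ω))) μ ∧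
      ∫ ω, CE (f (X ω)) (Y ω) ∂μ = ∫ ω, CE (f (X ω)) (p (X ω)) ∂μ := by
  set a : Ω → ℝ := fun ω => -Real.log (sigmoid (f (X ω)))
  set b : Ω → ℝ := fun ω => -Real.log (sigmoid (-f (X ω)))
  have hXm := comap_measurable (m := (inferInstance : MeasurableSpace β)) X
  have ha : StronglyMeasurable[MeasurableSpace.comap X inferInstance] a :=
    ((measurable_sigmoid.comp (hf.comp hXm)).log.neg).stronglyMeasurable
  have hb : StronglyMeasurable[MeasurableSpace.comap X inferInstance] b :=
    ((measurable_sigmoid.comp (hf.comp hXm).neg).log.neg).stronglyMeasurable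
  have hYint : Integrable Y μ := integrable_of_forall_mem_Icc_zero_one hY hY01
  have hY'int : Integrable (fun ω => 1 - Y ω) μ := (integrable_const 1).sub hYint
  have hsplit : (fun ω => CE (f (X ω)) (Y ω)) = a * Y + b * fun ω => 1 - Y ω :=
    funext fun ω => CE_eq _ _
  have hsplit' : (fun ω => CE (f (X ω)) (p (X ω))) = a * (p ∘ X) + b * fun ω => 1 - p (X ω) :=
    funext fun ω => CE_eq _ _
  obtain ⟨haY, hbY⟩ : Integrable (a * Y) μ ∧ Integrable (b * fun ω => 1 - Y ω) μ :=
    (integrable_add_iff_of_nonneg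
      ((ha.mono hX.comap_le).measurable.mul hY).aestronglyMeasurable
      (.of_forall fun ω => mul_nonneg (neg_log_sigmoid_nonneg _) (hY01 ω).1)
      (.of_forall fun ω => mul_nonneg (neg_log_sigmoid_nonneg _) (sub_nonneg.2 (hY01 ω).2))).1
      (hsplit ▸ hCE)
  have hp' := condExp_one_sub_comap hX hYint hp
  have haZ := integrable_mul_of_ae_eq_condExp ha haY hYint hp
  have hbZ := integrable_mul_of_ae_eq_condExp hb hbY hY'int hp'
  refine ⟨hsplit' ▸ haZ.add hbZ, ?_⟩
  rw [hsplit, hsplit', integral_add' haY hbY, integral_add' haZ hbZ,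
    integral_mul_of_ae_eq_condExp hX.comap_le ha haY hYint hp,
    integral_mul_of_ae_eq_condExp hX.comap_le hb hbY hY'int hp']

lemma integral_CE_logit_le (hX : Measurable X) (hY : Measurable Y)
    (hY01 : ∀ ω, Y ω ∈ Set.Icc (0 : ℝ) 1) (hpm : Measurable p)
    (hp01 : ∀ x, p x ∈ Set.Ioo (0 : ℝ) 1)
    (hp : (p ∘ X) =ᵐ[μ] μ[Y|MeasurableSpace.comap X inferInstance]) (hf : Measurable f)
    (hCE : Integrable (fun ω => CE (f (X ω)) (Y ω)) μ) :
    ∫ ω, CE (logit (p (X ω))) (Y ω) ∂μ ≤ ∫ ω, CE (f (X ω)) (Y ω) ∂μ := by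
  by_cases hCE' : Integrable (fun ω => CE (logit (p (X ω))) (Y ω)) μ
  · obtain ⟨hint', heq'⟩ :=
      integral_CE_eq_of_ae_eq_condExp (f := fun x => logit (p x)) hX hY hY01 hp
        (measurable_logit.comp hpm) hCE'
    obtain ⟨hint, heq⟩ := integral_CE_eq_of_ae_eq_condExp hX hY hY01 hp hf hCE
    rw [heq', heq]
    exact integral_mono hint' hint fun ω => CE_logit_le (hp01 (X ω)) _
  · rw [integral_undef hCE']
    exact integral_nonneg fun ω => CE_nonneg _ (hY01 ω)

end CrossEntropy

/-- Theorem 1 of the paper, cross-entropy case. With `E*_i = logit ∘ ξ_i` for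
`i ≤ m` (and `0` otherwise) and `ν*` the law of `(X, E*(X))`, the pair `(E*, ν*)` is a global
minimizer of `KL(law(X,E(X)), ν) + λ·Σᵢ 𝔼[CE(Eᵢ(X), Yᵢ)]`; the minimum value equals
`λ·Σᵢ 𝔼[CE(logit(ξᵢ(X)), Yᵢ)]`, and `E*` is disentangled w.r.t. `ξ` with `g_i = σ⁻¹ = logit`. -/
theorem DEAR_identifiability_crossEntropy
    {Ω : Type*} [MeasurableSpace Ω] (μ : Measure Ω) [IsProbabilityMeasure μ]
    {d m k : ℕ} (hmk : m ≤ k)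
    (X : Ω → (Fin d → ℝ)) (hX : Measurable X)
    (Y : Ω → (Fin m → ℝ)) (hY : Measurable Y)
    (hY01 : ∀ ω i, Y ω i ∈ Set.Icc (0 : ℝ) 1)
    (lam : ℝ) (hlam : 0 < lam)
    (ξ : Fin m → (Fin d → ℝ) → ℝ) (hξ : ∀ i, Measurable (ξ i))
    (hξ01 : ∀ i x, ξ i x ∈ Set.Ioo (0 : ℝ) 1)
    (hcond : ∀ i, (fun ω => ξ i (X ω))
      =ᵐ[μ] μ[fun ω => Y ω i | MeasurableSpace.comap X inferInstance])
    (Estar : (Fin d → ℝ) → (Fin k → ℝ))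
    (hEstar : ∀ x (i : Fin k),
      Estar x i = if h : (i : ℕ) < m then logit (ξ ⟨i, h⟩ x) else 0) :
    (∀ (E : (Fin d → ℝ) → (Fin k → ℝ)), Measurable E →
      (∀ i : Fin m, Integrable (fun ω => CE (E (X ω) (Fin.castLE hmk i)) (Y ω i)) μ) →
      ∀ (ν : Measure ((Fin d → ℝ) × (Fin k → ℝ))), IsProbabilityMeasure ν →
        klDiv (Measure.map (fun ω => (X ω, Estar (X ω))) μ)
            (Measure.map (fun ω => (X ω, Estar (X ω))) μ)
          + ENNReal.ofReal
              (lam * ∑ i : Fin m, ∫ ω, CE (Estar (X ω) (Fin.castLE hmk i)) (Y ω i) ∂μ)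
        ≤ klDiv (Measure.map (fun ω => (X ω, E (X ω))) μ) ν
          + ENNReal.ofReal
              (lam * ∑ i : Fin m, ∫ ω, CE (E (X ω) (Fin.castLE hmk i)) (Y ω i) ∂μ))
    ∧ klDiv (Measure.map (fun ω => (X ω, Estar (X ω))) μ)
          (Measure.map (fun ω => (X ω, Estar (X ω))) μ)
        + ENNReal.ofReal
            (lam * ∑ i : Fin m, ∫ ω, CE (Estar (X ω) (Fin.castLE hmk i)) (Y ω i) ∂μ)
      = ENNReal.ofReal (lam * ∑ i : Fin m, ∫ ω, CE (logit (ξ i (X ω))) (Y ω i) ∂μ)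
    ∧ ∀ i : Fin m, Set.InjOn logit (Set.Ioo (0 : ℝ) 1)
        ∧ ∀ x, Estar x (Fin.castLE hmk i) = logit (ξ i x) := by
  have hEstar_coord : ∀ (i : Fin m) x, Estar x (Fin.castLE hmk i) = logit (ξ i x) :=
    fun i x => by simp [hEstar]
  have hKL : klDiv (Measure.map (fun ω => (X ω, Estar (X ω))) μ)
      (Measure.map (fun ω => (X ω, Estar (X ω))) μ) = 0 := klDiv_self _
  simp only [hKL, zero_add]
  refine ⟨fun E hE hCE ν _ => ?_, by simp only [hEstar_coord],
    fun i => ⟨logit_injOn, hEstar_coord i⟩⟩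
  refine le_add_left (ENNReal.ofReal_le_ofReal
    (mul_le_mul_of_nonneg_left (Finset.sum_le_sum fun i _ => ?_) hlam.le))
  simp only [hEstar_coord]
  exact integral_CE_logit_le hX ((measurable_pi_apply i).comp hY) (hY01 · i) (hξ i)
    (hξ01 i) (hcond i) ((measurable_pi_apply _).comp hE) (hCE i)
end

section
/- Let V : ℝ^n → ℝ^n be a continuously differentiable vector field with compact support, and let μ be a finite measure on ℝ^n with continuously differentiable density p with respect to Lebesgue measure. For t ∈ ℝ define T_t : ℝ^n → ℝ^n by T_t(y) = y + t·V(y). Then there exists t₀ > 0 such that for all |t| < t₀: T_t is a C¹ diffeomorphism of ℝ^n, the pushforward (T_t)_*μ has a density p_t with respect to Lebesgue measure, and for every y ∈ ℝ^n the map t ↦ p_t(y) is differentiable at t = 0 with derivative ∂_t p_t(y)|_{t=0} = −⟨∇p(y), V(y)⟩ − p(y)·(∇·V)(y), where ∇·V = Σ_{j=1}^n ∂V_j/∂y_j is the divergence of V. -/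
/-! For `|t| ‖V‖_Lip < 1` the map `T_t = id + t • V` is a Lipschitz perturbation of the identity,
hence a homeomorphism, and its derivative `1 + t • DV` is invertible (Neumann series); so `T_t` is
a `C¹` diffeomorphism and the change of variables formula gives the density
`p_t(y) = p(x_t) / |det (1 + t • DV(x_t))|` with `x_t = T_t⁻¹ y`. Since `x_t + t • V(x_t) = y` and
`V` is bounded, `x_t → y` and `ẋ_0 = -V(y)`. Jacobi's formula at the identity,
`d/dt det (1 + t • A_t)|_{t=0} = tr A_0`, comes from the multilinearity of the determinant in the
images of a basis; the quotient rule then gives the derivative of `p_t(y)`. -/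

open MeasureTheory Filter Topology Function Set
open scoped NNReal

theorem hasDerivAt_smul_self_of_continuousAt {F : Type*} [NormedAddCommGroup F]
    [NormedSpace ℝ F] {W : ℝ → F} (hW : ContinuousAt W 0) :
    HasDerivAt (fun t => t • W t) (W 0) 0 := by
  rw [hasDerivAt_iff_tendsto_slope]
  refine (hW.tendsto.mono_left nhdsWithin_le_nhds).congr' ?_
  filter_upwards [self_mem_nhdsWithin] with t (ht : t ≠ 0)
  simp [slope_def_module, ht]

theorem Module.Basis.det_update_self {ι R M : Type*} [Fintype ι] [DecidableEq ι] [CommRing R]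
    [AddCommGroup M] [Module R M] (b : Module.Basis ι R M) (i : ι) (v : M) :
    b.det (update b i v) = b.repr v i := by
  rw [b.det_apply, b.toMatrix_update, b.toMatrix_self, ← Matrix.cramer_apply, Matrix.cramer_one]
  rfl

theorem Module.Basis.continuous_det {ι 𝕜 E : Type*} [Fintype ι] [DecidableEq ι]
    [NontriviallyNormedField 𝕜] [CompleteSpace 𝕜] [NormedAddCommGroup E] [NormedSpace 𝕜 E]
    [FiniteDimensional 𝕜 E] (b : Module.Basis ι 𝕜 E) :
    Continuous (b.det : (ι → E) → 𝕜) := by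
  rw [show (b.det : (ι → E) → 𝕜) = fun v => (b.toMatrix v).det from funext b.det_apply]
  refine Continuous.matrix_det (continuous_pi fun i => continuous_pi fun j => ?_)
  change Continuous fun v : ι → E => b.coord i (v j)
  exact (b.coord i).continuous_of_finiteDimensional.comp (continuous_apply j)

theorem hasDerivAt_det_one_add_smul {E : Type*} [NormedAddCommGroup E] [NormedSpace ℝ E]
    [FiniteDimensional ℝ E] {L : ℝ → E →L[ℝ] E} (hL : ContinuousAt L 0) :
    HasDerivAt (fun t => (1 + t • L t).det) (LinearMap.trace ℝ E (L 0)) 0 := by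
  classical
  let b := Module.finBasis ℝ E
  let D : ContinuousMultilinearMap ℝ (fun _ => E) ℝ :=
    ⟨b.det.toMultilinearMap, b.continuous_det⟩
  have hdet (f : E →L[ℝ] E) : f.det = D (f ∘ b) := by
    have := b.det_comp (f : E →ₗ[ℝ] E) b
    rw [b.det_self, mul_one] at this
    exact this.symm
  have hcols : ContinuousAt (fun t i => L t (b i)) 0 :=
    continuousAt_pi.2 fun i =>
      (ContinuousLinearMap.apply ℝ E (b i)).continuous.continuousAt.comp hL
  have hpath := (D.hasFDerivAt b).comp_hasDerivAt_of_eq 0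
    ((hasDerivAt_smul_self_of_continuousAt hcols).const_add (⇑b)) (by simp)
  have htrace : D.linearDeriv b (fun i => L 0 (b i)) = LinearMap.trace ℝ E (L 0) := by
    rw [ContinuousMultilinearMap.linearDeriv_apply, LinearMap.trace_eq_matrix_trace ℝ b]
    refine Finset.sum_congr rfl fun i _ => ?_
    rw [Matrix.diag_apply, LinearMap.toMatrix_apply]
    exact b.det_update_self i _
  rw [htrace] at hpath
  refine hpath.congr_of_eventuallyEq (Eventually.of_forall fun t => ?_)
  dsimp only [comp_apply]
  rw [hdet]
  congr 1

theorem LinearMap.trace_eq_sum_apply_single {ι R : Type*} [Fintype ι] [DecidableEq ι]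
    [CommRing R] (f : (ι → R) →ₗ[R] ι → R) : trace R (ι → R) f = ∑ i, f (Pi.single i 1) i := by
  simp [trace_eq_matrix_trace R (Pi.basisFun R ι), Matrix.trace]

section PerturbationOfIdentity

variable {E : Type*} [NormedAddCommGroup E] [NormedSpace ℝ E] {V : E → E} {K : ℝ≥0}
  {t : ℝ}

theorem approximatesLinearOn_add_smul (hK : LipschitzWith K V) (t : ℝ) :
    ApproximatesLinearOn (fun y => y + t • V y) (ContinuousLinearMap.id ℝ E) univ
      (‖t‖₊ * K) := by
  refine LipschitzOnWith.approximatesLinearOn ?_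
  have : ((fun y => y + t • V y) - ContinuousLinearMap.id ℝ E) = t • V := by
    ext y; simp
  rw [this]
  exact lipschitzOnWith_univ.2 ((lipschitzWith_smul t).comp hK)

theorem isUnit_one_add_smul_fderiv [CompleteSpace E] (hK : LipschitzWith K V)
    (ht : ‖t‖₊ * K < 1) (x : E) : IsUnit (1 + t • fderiv ℝ V x) := by
  have hnorm : ‖-(t • fderiv ℝ V x)‖ < 1 := by
    rw [norm_neg, norm_smul]
    refine lt_of_le_of_lt ?_ (NNReal.coe_lt_coe.2 ht)
    push_cast
    exact mul_le_mul_of_nonneg_left (norm_fderiv_le_of_lipschitz ℝ hK) (norm_nonneg t)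
  simpa using (Units.oneSub _ hnorm).isUnit

noncomputable def Homeomorph.addSMul [CompleteSpace E] (hK : LipschitzWith K V)
    (ht : ‖t‖₊ * K < 1) : E ≃ₜ E :=
  (approximatesLinearOn_add_smul hK t).toHomeomorph (f' := .refl ℝ E) _ <| by
    rcases subsingleton_or_nontrivial E with hE | hE
    · exact .inl hE
    · right
      simpa using ht

theorem Homeomorph.coe_addSMul [CompleteSpace E] (hK : LipschitzWith K V)
    (ht : ‖t‖₊ * K < 1) :
    ⇑(Homeomorph.addSMul hK ht) = fun y => y + t • V y :=
  rfl

theorem bijective_add_smul [CompleteSpace E] (hK : LipschitzWith K V) (ht : ‖t‖₊ * K < 1) :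
    Bijective fun y => y + t • V y :=
  Homeomorph.coe_addSMul hK ht ▸ (Homeomorph.addSMul hK ht).bijective

theorem contDiff_invFun_add_smul [CompleteSpace E] (hV : ContDiff ℝ 1 V) (hK : LipschitzWith K V)
    (ht : ‖t‖₊ * K < 1) : ContDiff ℝ 1 (invFun fun y => y + t • V y) := by
  let h := Homeomorph.addSMul hK ht
  have hinv : (invFun fun y => y + t • V y) = h.symm := by
    rw [← Homeomorph.coe_addSMul hK ht]
    funext y
    exact h.injective (by rw [h.apply_symm_apply]; exact invFun_eq (h.surjective y))
  rw [hinv]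
  refine h.contDiff_symm
    (f₀' := fun x => .ofUnit (isUnit_one_add_smul_fderiv hK ht x).unit) (fun x => ?_)
    (contDiff_id.add (hV.const_smul t))
  exact (hasFDerivAt_id x).add ((hV.differentiable one_ne_zero x).hasFDerivAt.const_smul t)

theorem det_one_add_smul_fderiv_ne_zero [FiniteDimensional ℝ E] (hK : LipschitzWith K V)
    (ht : ‖t‖₊ * K < 1) (x : E) : (1 + t • fderiv ℝ V x).det ≠ 0 :=
  (LinearMap.isUnit_det _
    ((isUnit_one_add_smul_fderiv hK ht x).map ContinuousLinearMap.toLinearMapRingHom)).ne_zero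

end PerturbationOfIdentity

section InversePath

variable {E : Type*} [NormedAddCommGroup E] [NormedSpace ℝ E] {V : E → E} {s : ℝ → E}
  {y : E}

theorem tendsto_of_add_smul_eq {C : ℝ} (hC : ∀ x, ‖V x‖ ≤ C)
    (hs : ∀ᶠ t in 𝓝 0, s t + t • V (s t) = y) : Tendsto s (𝓝 0) (𝓝 y) := by
  rw [tendsto_iff_norm_sub_tendsto_zero]
  have hbound : ∀ᶠ t in 𝓝 0, ‖s t - y‖ ≤ |t| * C := by
    filter_upwards [hs] with t ht
    rw [← ht, sub_add_cancel_left, norm_neg, norm_smul, Real.norm_eq_abs]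
    exact mul_le_mul_of_nonneg_left (hC _) (abs_nonneg t)
  refine squeeze_zero' (Eventually.of_forall fun t => norm_nonneg _) hbound ?_
  simpa using (continuous_abs.tendsto (0 : ℝ)).mul_const C

theorem hasDerivAt_of_add_smul_eq {C : ℝ} (hC : ∀ x, ‖V x‖ ≤ C) (hV : ContinuousAt V y)
    (hs : ∀ᶠ t in 𝓝 0, s t + t • V (s t) = y) : HasDerivAt s (-V y) 0 := by
  have hs0 : s 0 = y := by simpa using hs.self_of_nhds
  have hsc : ContinuousAt s 0 := by
    rw [ContinuousAt, hs0]
    exact tendsto_of_add_smul_eq hC hs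
  have hline := (hasDerivAt_smul_self_of_continuousAt (hV.comp_of_eq hsc hs0).neg).const_add y
  simp only [Pi.neg_apply, comp_apply, hs0] at hline
  refine hline.congr_of_eventuallyEq ?_
  filter_upwards [hs] with t ht
  rw [smul_neg, ← ht, add_neg_cancel_right]

end InversePath

theorem map_withDensity_ofReal_eq_of_hasFDerivAt {E : Type*} [NormedAddCommGroup E]
    [NormedSpace ℝ E] [FiniteDimensional ℝ E] [MeasurableSpace E] [BorelSpace E]
    (μ : Measure E) [μ.IsAddHaarMeasure] {f g : E → E} {f' : E → E →L[ℝ] E}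
    (hf' : ∀ x, HasFDerivAt f (f' x) x) (hdet : ∀ x, (f' x).det ≠ 0)
    (hgf : LeftInverse g f) (hfg : RightInverse g f) (ρ : E → ℝ) :
    Measure.map f (μ.withDensity fun x => ENNReal.ofReal (ρ x)) =
      μ.withDensity fun y => ENNReal.ofReal (ρ (g y) * |(f' (g y)).det|⁻¹) := by
  have hf : Measurable f := (continuous_iff_continuousAt.2 fun x => (hf' x).continuousAt).measurable
  ext A hA
  rw [Measure.map_apply hf hA, withDensity_apply _ (hf hA), withDensity_apply _ hA]
  conv_rhs => rw [← image_preimage_eq A hfg.surjective]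
  rw [lintegral_image_eq_lintegral_abs_det_fderiv_mul μ (hf hA)
      (fun x _ => (hf' x).hasFDerivWithinAt) hgf.injective.injOn]
  refine lintegral_congr fun x => ?_
  rw [hgf x, ← ENNReal.ofReal_mul (abs_nonneg _), mul_comm (ρ x),
    mul_inv_cancel_left₀ (abs_ne_zero.2 (hdet x))]

section TransportDensity

variable {E : Type*} [NormedAddCommGroup E] [NormedSpace ℝ E] [FiniteDimensional ℝ E]
  {V : E → E} {K : ℝ≥0}

-- Only meaningful when `x ↦ x + t • V x` is bijective; otherwise `invFun` picks junk values.
noncomputable def transportDensity (V : E → E) (ρ : E → ℝ) (t : ℝ) (y : E) : ℝ :=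
  ρ (invFun (fun x => x + t • V x) y) *
    |(1 + t • fderiv ℝ V (invFun (fun x => x + t • V x) y)).det|⁻¹

theorem map_withDensity_eq_withDensity_transportDensity [MeasurableSpace E] [BorelSpace E]
    (μ : Measure E) [μ.IsAddHaarMeasure] (hV : ContDiff ℝ 1 V) (hK : LipschitzWith K V)
    {t : ℝ} (ht : ‖t‖₊ * K < 1) (ρ : E → ℝ) :
    Measure.map (fun x => x + t • V x) (μ.withDensity fun x => ENNReal.ofReal (ρ x)) =
      μ.withDensity fun y => ENNReal.ofReal (transportDensity V ρ t y) :=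
  map_withDensity_ofReal_eq_of_hasFDerivAt μ
    (fun x => (hasFDerivAt_id x).add ((hV.differentiable one_ne_zero x).hasFDerivAt.const_smul t))
    (det_one_add_smul_fderiv_ne_zero hK ht)
    (leftInverse_invFun (bijective_add_smul hK ht).1)
    (rightInverse_invFun (bijective_add_smul hK ht).2) ρ

theorem hasDerivAt_transportDensity {C : ℝ} (hV : ContDiff ℝ 1 V) (hK : LipschitzWith K V)
    (hC : ∀ x, ‖V x‖ ≤ C) {ρ : E → ℝ} {y : E} (hρ : DifferentiableAt ℝ ρ y) :
    HasDerivAt (fun t => transportDensity V ρ t y)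
      (-(fderiv ℝ ρ y (V y)) - ρ y * LinearMap.trace ℝ E (fderiv ℝ V y)) 0 := by
  set s := fun t : ℝ => invFun (fun x => x + t • V x) y
  have hsmall : ∀ᶠ t : ℝ in 𝓝 0, ‖t‖₊ * K < 1 := by
    have : Tendsto (fun t : ℝ => ‖t‖₊ * K) (𝓝 0) (𝓝 0) := by
      simpa using (continuous_nnnorm.tendsto (0 : ℝ)).mul_const K
    exact this.eventually (gt_mem_nhds one_pos)
  have hs : ∀ᶠ t in 𝓝 0, s t + t • V (s t) = y := by
    filter_upwards [hsmall] with t ht using rightInverse_invFun (bijective_add_smul hK ht).2 y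
  have hs0 : s 0 = y := by simpa using hs.self_of_nhds
  have hsd := hasDerivAt_of_add_smul_eq hC hK.continuous.continuousAt hs
  have hρs : HasDerivAt (fun t => ρ (s t)) (-(fderiv ℝ ρ y (V y))) 0 := by
    have := hρ.hasFDerivAt.comp_hasDerivAt_of_eq 0 hsd hs0.symm
    rwa [map_neg] at this
  have hdet := hasDerivAt_det_one_add_smul (L := fun t => fderiv ℝ V (s t))
    ((hV.continuous_fderiv one_ne_zero).continuousAt.comp_of_eq hsd.continuousAt hs0)
  have hdet0 : (1 + (0 : ℝ) • fderiv ℝ V (s 0)).det = 1 := by simp [ContinuousLinearMap.det]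
  have hpos : ∀ᶠ t in 𝓝 0, 0 < (1 + t • fderiv ℝ V (s t)).det :=
    hdet.continuousAt.eventually (lt_mem_nhds (by dsimp only; rw [hdet0]; exact one_pos))
  have hquot := hρs.fun_div hdet (by rw [hdet0]; exact one_ne_zero)
  refine (hquot.congr_of_eventuallyEq ?_).congr_deriv ?_
  · filter_upwards [hpos] with t ht
    rw [transportDensity, abs_of_pos ht, div_eq_mul_inv]
  · rw [hdet0, hs0]
    ring

end TransportDensity

theorem pushforward_density_derivative_general
    {n : ℕ} (V : (Fin n → ℝ) → (Fin n → ℝ))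
    (hV : ContDiff ℝ 1 V) (hVsupp : HasCompactSupport V)
    (p : (Fin n → ℝ) → ℝ) (hp : ContDiff ℝ 1 p) :
    ∃ t₀ : ℝ, 0 < t₀ ∧ ∃ pt : ℝ → (Fin n → ℝ) → ℝ,
      (∀ t : ℝ, |t| < t₀ →
        (∃ S : (Fin n → ℝ) → (Fin n → ℝ), ContDiff ℝ 1 S ∧
          Function.LeftInverse S (fun y => y + t • V y) ∧
          Function.RightInverse S (fun y => y + t • V y)) ∧
        Measure.map (fun y => y + t • V y)
            (volume.withDensity fun x => ENNReal.ofReal (p x))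
          = volume.withDensity fun y => ENNReal.ofReal (pt t y)) ∧
      ∀ y : Fin n → ℝ,
        HasDerivAt (fun t => pt t y)
          (-(fderiv ℝ p y (V y))
            - p y * ∑ j : Fin n, fderiv ℝ V y (Pi.single j 1) j) 0 := by
  obtain ⟨K, hK⟩ := hV.lipschitzWith_of_hasCompactSupport hVsupp one_ne_zero
  obtain ⟨C, hC⟩ := hVsupp.exists_bound_of_continuous hV.continuous
  have hsmall {t : ℝ} (ht : |t| < ((K : ℝ) + 1)⁻¹) : ‖t‖₊ * K < 1 := by
    have hK1 : |t| * ((K : ℝ) + 1) < 1 := by rwa [← lt_div_iff₀ (by positivity), one_div]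
    rw [← NNReal.coe_lt_coe, NNReal.coe_mul, coe_nnnorm, Real.norm_eq_abs, NNReal.coe_one]
    nlinarith [abs_nonneg t]
  refine ⟨((K : ℝ) + 1)⁻¹, by positivity, transportDensity V p, fun t ht => ?_, fun y => ?_⟩
  · have hbij := bijective_add_smul hK (hsmall ht)
    exact ⟨⟨_, contDiff_invFun_add_smul hV hK (hsmall ht), leftInverse_invFun hbij.1,
      rightInverse_invFun hbij.2⟩,
      map_withDensity_eq_withDensity_transportDensity volume hV hK (hsmall ht) p⟩
  · simpa [LinearMap.trace_eq_sum_apply_single] using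
      hasDerivAt_transportDensity hV hK hC (hp.differentiable one_ne_zero y)

/-- directional form of Lemma 2 of the paper. Let `V : ℝ^n → ℝ^n` be a `C¹`
compactly supported vector field and let `μ` be a finite measure with `C¹` density `p ≥ 0` with
respect to Lebesgue measure. With `T_t(y) = y + t·V(y)`, there is `t₀ > 0` such that for
`|t| < t₀`, `T_t` is a `C¹` diffeomorphism, the pushforward `(T_t)_*μ` has a density `p_t`, and
for every `y`, `t ↦ p_t(y)` is differentiable at `0` with derivative
`−⟨∇p(y), V(y)⟩ − p(y)·(∇·V)(y)`. -/
theorem pushforward_density_derivative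
    {n : ℕ} (V : (Fin n → ℝ) → (Fin n → ℝ))
    (hV : ContDiff ℝ 1 V) (hVsupp : HasCompactSupport V)
    (p : (Fin n → ℝ) → ℝ) (hp : ContDiff ℝ 1 p) (hp0 : ∀ x, 0 ≤ p x)
    (hfin : IsFiniteMeasure (volume.withDensity fun x => ENNReal.ofReal (p x))) :
    ∃ t₀ : ℝ, 0 < t₀ ∧ ∃ pt : ℝ → (Fin n → ℝ) → ℝ,
      (∀ t : ℝ, |t| < t₀ →
        (∃ S : (Fin n → ℝ) → (Fin n → ℝ), ContDiff ℝ 1 S ∧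
          Function.LeftInverse S (fun y => y + t • V y) ∧
          Function.RightInverse S (fun y => y + t • V y)) ∧
        Measure.map (fun y => y + t • V y)
            (volume.withDensity fun x => ENNReal.ofReal (p x))
          = volume.withDensity fun y => ENNReal.ofReal (pt t y)) ∧
      ∀ y : Fin n → ℝ,
        HasDerivAt (fun t => pt t y)
          (-(fderiv ℝ p y (V y))
            - p y * ∑ j : Fin n, fderiv ℝ V y (Pi.single j 1) j) 0 :=
  pushforward_density_derivative_general V hV hVsupp p hp
end
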